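/- arXiv:1004.5256 — 5 statements merged into one kernel-verified Lean document; each statement's English description precedes it below -/
import Mathlib

section
/- In any execution of CAFS, every correct neighbor v of the root r executes at most 2Δ rule actions, where Δ is the maximum degree of the graph. -/
open Function

/-- A configuration of the system: each process has a parent pointer `P`
(a process or `⊥ = none`) and a height `H`. -/
structure Config (V : Type) where
  P : V → Option V
  H : V → ℕ

variable {V : Type}

/-- The local specification of the spanning-forest problem. -/
def Spec [DecidableEq V] (G : SimpleGraph V) (r : V) (B : Set V)
    (ρ : Config V) (v : V) : Prop :=
  if v = r then ρ.P v = none ∧ ρ.H v = 0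
  else ∃ u, ρ.P v = some u ∧ G.Adj v u ∧ (u ∉ B → ρ.H v = ρ.H u + 1)

/-- Guard of the rule of the root. -/
def GuardRoot (ρ : Config V) (r : V) : Prop := ρ.P r ≠ none ∨ ρ.H r ≠ 0

/-- Guard of the rule of a non-root process:
`P v ∉ N v ∨ H v ≠ H (P v) + 1`. -/
def GuardNonRoot (G : SimpleGraph V) (ρ : Config V) (v : V) : Prop :=
  ¬ ∃ u, ρ.P v = some u ∧ G.Adj v u ∧ ρ.H v = ρ.H u + 1

/-- A process is enabled when the guard of its rule holds. -/
def Enabled [DecidableEq V] (G : SimpleGraph V) (r : V) (ρ : Config V) (v : V) : Prop :=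
  if v = r then GuardRoot ρ r else GuardNonRoot G ρ v

/-- `next v o` is the cyclic successor of `o` among the neighbors of `v`. -/
def CyclicNext (G : SimpleGraph V) (next : V → Option V → V) : Prop :=
  (∀ v o, G.Adj v (next v o)) ∧
  ∀ v w, G.Adj v w → ∀ o : Option V, ∃ k, k < (G.neighborSet v).ncard ∧
    (fun u : V => next v (some u))^[k] (next v o) = w

/-- One step of the CAFS protocol: every correct process either keeps its state
or applies its (enabled) rule; Byzantine processes are unconstrained. -/
def Step [DecidableEq V] (G : SimpleGraph V) (r : V) (B : Set V)
    (next : V → Option V → V) (ρ ρ' : Config V) : Prop :=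
  ∀ v, v ∉ B →
    ((ρ'.P v = ρ.P v ∧ ρ'.H v = ρ.H v) ∨
     (if v = r then
        GuardRoot ρ r ∧ ρ'.P v = none ∧ ρ'.H v = 0
      else
        GuardNonRoot G ρ v ∧ ρ'.P v = some (next v (ρ.P v)) ∧
          ρ'.H v = ρ.H (next v (ρ.P v)) + 1))

/-- An execution of CAFS: an infinite sequence of configurations related by steps. -/
def IsExec [DecidableEq V] (G : SimpleGraph V) (r : V) (B : Set V)
    (next : V → Option V → V) (e : ℕ → Config V) : Prop :=
  ∀ i, Step G r B next (e i) (e (i + 1))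

/-- Process `v` acts (modifies its output variables) at step `i`. -/
def Acts (e : ℕ → Config V) (v : V) (i : ℕ) : Prop :=
  (e (i + 1)).P v ≠ (e i).P v ∨ (e (i + 1)).H v ≠ (e i).H v

/-- Weak fairness: no correct process is continuously enabled without acting. -/
def WeaklyFair [DecidableEq V] (G : SimpleGraph V) (r : V) (B : Set V)
    (e : ℕ → Config V) : Prop :=
  ∀ v, v ∉ B → ∀ i, (∀ j, i ≤ j → Enabled G r (e j) v) → ∃ j, i ≤ j ∧ Acts e v j

/-- A configuration is 0-legitimate if every correct process satisfies `Spec`. -/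
def ZeroLegit [DecidableEq V] (G : SimpleGraph V) (r : V) (B : Set V)
    (ρ : Config V) : Prop :=
  ∀ v, v ∉ B → Spec G r B ρ v

/-- Byzantine processes take no action along `e`. -/
def ByzIdle (B : Set V) (e : ℕ → Config V) : Prop :=
  ∀ i, ∀ b ∈ B, (e (i + 1)).P b = (e i).P b ∧ (e (i + 1)).H b = (e i).H b

/-- A configuration is 0-stable if no correct process changes its output
variables as long as the Byzantine processes take no action. -/
def ZeroStable [DecidableEq V] (G : SimpleGraph V) (r : V) (B : Set V)
    (next : V → Option V → V) (ρ : Config V) : Prop :=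
  ∀ e, IsExec G r B next e → e 0 = ρ → ByzIdle B e →
    ∀ i, ∀ v, v ∉ B → (e i).P v = ρ.P v ∧ (e i).H v = ρ.H v

/-- 0-legitimate and 0-stable. -/
def LegitStable [DecidableEq V] (G : SimpleGraph V) (r : V) (B : Set V)
    (next : V → Option V → V) (ρ : Config V) : Prop :=
  ZeroLegit G r B ρ ∧ ZeroStable G r B next ρ

/-- A 0-perturbation of the execution `e` between indices `a` and `b`. -/
def IsPerturbation [DecidableEq V] (G : SimpleGraph V) (r : V) (B : Set V)
    (next : V → Option V → V) (e : ℕ → Config V) (a b : ℕ) : Prop :=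
  a < b ∧ LegitStable G r B next (e a) ∧
  (∃ i v, a ≤ i ∧ i < b ∧ v ∉ B ∧ Acts e v i) ∧
  LegitStable G r B next (e b) ∧
  ∀ j, a < j → j < b → ¬ LegitStable G r B next (e j)

/-- A `(t, k, 0, f)`-time-contained configuration (containment radius `0`,
the number `f` of Byzantine processes being implicit in `B`). -/
def TimeContained [DecidableEq V] (G : SimpleGraph V) (r : V) (B : Set V)
    (next : V → Option V → V) (t k : ℕ) (ρ : Config V) : Prop :=
  LegitStable G r B next ρ ∧
  (∀ e, IsExec G r B next e → e 0 = ρ →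
    ∃ i, ZeroLegit G r B (e i) ∧
      ∀ j, i ≤ j → ∀ v, v ∉ B →
        (e j).P v = (e i).P v ∧ (e j).H v = (e i).H v) ∧
  (∀ e, IsExec G r B next e → e 0 = ρ →
    {p : ℕ × ℕ | IsPerturbation G r B next e p.1 p.2}.Finite ∧
    {p : ℕ × ℕ | IsPerturbation G r B next e p.1 p.2}.ncard ≤ t) ∧
  (∀ e, IsExec G r B next e → e 0 = ρ → ∀ v, v ∉ B →
    {i : ℕ | Acts e v i}.Finite ∧ {i : ℕ | Acts e v i}.ncard ≤ k)

section AuxCAFS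

variable [DecidableEq V] {G : SimpleGraph V} {r : V} {B : Set V}
  {next : V → Option V → V} {e : ℕ → Config V}

/-- If a process does not act on `[i, j)`, its state at `j` equals its state at `i`. -/
lemma const_of_no_acts (w : V) {i j : ℕ} (hij : i ≤ j)
    (h : ∀ s, i ≤ s → s < j → ¬ Acts e w s) :
    (e j).P w = (e i).P w ∧ (e j).H w = (e i).H w := by
  induction j, hij using Nat.le_induction with
  | base => exact ⟨rfl, rfl⟩
  | succ j hij ih =>
    have hna := h j hij (Nat.lt_succ_self j)
    unfold Acts at hna
    push_neg at hna
    have hprev := ih (fun s hs hs' => h s hs (Nat.lt_succ_of_lt hs'))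
    exact ⟨hna.1.trans hprev.1, hna.2.trans hprev.2⟩

/-- Unfolding an action of a correct non-root process. -/
lemma acts_step (hexec : IsExec G r B next e) {w : V} (hw : w ∉ B) (hwr : w ≠ r)
    {i : ℕ} (ha : Acts e w i) :
    GuardNonRoot G (e i) w ∧ (e (i+1)).P w = some (next w ((e i).P w)) ∧
      (e (i+1)).H w = (e i).H (next w ((e i).P w)) + 1 := by
  have h := hexec i w hw
  rw [if_neg hwr] at h
  rcases h with h | h
  · unfold Acts at ha
    rcases ha with ha | ha
    · exact absurd h.1 ha
    · exact absurd h.2 ha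
  · exact h

/-- The root acts at most once. -/
lemma root_once (hexec : IsExec G r B next e) (hr : r ∉ B)
    {s s' : ℕ} (h1 : Acts e r s) (h2 : Acts e r s') : s = s' := by
  suffices key : ∀ a b, a < b → Acts e r a → ¬ Acts e r b by
    rcases lt_trichotomy s s' with h | h | h
    · exact absurd h2 (key _ _ h h1)
    · exact h
    · exact absurd h1 (key _ _ h h2)
  intro a b hab ha hb
  have hstep := hexec a r hr
  rw [if_pos rfl] at hstep
  have h0 : (e (a+1)).P r = none ∧ (e (a+1)).H r = 0 := by
    rcases hstep with h | h
    · unfold Acts at ha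
      rcases ha with ha | ha
      · exact absurd h.1 ha
      · exact absurd h.2 ha
    · exact ⟨h.2.1, h.2.2⟩
  have hinv : ∀ c, a + 1 ≤ c → (e c).P r = none ∧ (e c).H r = 0 := by
    intro c hc
    induction c, hc using Nat.le_induction with
    | base => exact h0
    | succ c _ ih =>
      have hstep := hexec c r hr
      rw [if_pos rfl] at hstep
      rcases hstep with h | h
      · exact ⟨h.1.trans ih.1, h.2.trans ih.2⟩
      · exact ⟨h.2.1, h.2.2⟩
  have hbst := hinv b hab
  have hbst' := hinv (b+1) (by omega)
  unfold Acts at hb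
  rcases hb with hb | hb
  · exact hb (hbst'.1.trans hbst.1.symm)
  · exact hb (hbst'.2.trans hbst.2.symm)

/-- Key combinatorial lemma: there is no block of `2 * deg v + 1` consecutive
actions of a correct neighbor `v` of the root. -/
lemma key_lemma (hnext : CyclicNext G next) (hexec : IsExec G r B next e)
    (hr : r ∉ B) {v : V} (hv : v ∉ B) (hadj : G.Adj r v)
    (t : ℕ → ℕ)
    (hmono : ∀ k, k < 2 * (G.neighborSet v).ncard → t k < t (k+1))
    (hacts : ∀ k, k ≤ 2 * (G.neighborSet v).ncard → Acts e v (t k))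
    (hcons : ∀ k, k < 2 * (G.neighborSet v).ncard →
      ∀ s, t k < s → s < t (k+1) → ¬ Acts e v s) :
    False := by
  set d := (G.neighborSet v).ncard with hd
  have hvr : v ≠ r := hadj.ne'
  have hvradj : G.Adj v r := hadj.symm
  set g : V → V := fun u => next v (some u) with hg
  set q : ℕ → V := fun k => next v ((e (t k)).P v) with hq
  -- the parent pointer after consecutive actions follows the `next` orbit
  have step1 : ∀ k, k < 2 * d → q (k+1) = g (q k) := by
    intro k hk
    have hb := acts_step hexec hv hvr (hacts k (le_of_lt hk))
    have hc := (const_of_no_acts v (i := t k + 1) (j := t (k+1))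
        (hmono k hk)
        (fun s hs hs' => hcons k hk s (by omega) hs')).1
    simp only [hq, hg]
    rw [hc, hb.2.1]
  have step2 : ∀ k j, k + j ≤ 2 * d → q (k + j) = g^[j] (q k) := by
    intro k j
    induction j with
    | zero => intro _; simp
    | succ j ih =>
      intro hkj
      have h1 : k + j < 2 * d := by omega
      have h2 : q (k + (j+1)) = g (q (k + j)) := step1 (k + j) h1
      rw [h2, ih (le_of_lt h1), ← Function.iterate_succ_apply' g j (q k)]
  -- find two indices < 2d where v points to r after acting
  obtain ⟨k1, hk1d, hk1⟩ := hnext.2 v r hvradj ((e (t 0)).P v)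
  have hq1 : q k1 = r := by
    have h := step2 0 k1 (by omega)
    rw [Nat.zero_add] at h
    rw [h]
    simp only [hg, hq]
    exact hk1
  obtain ⟨k2, hk2d, hk2⟩ := hnext.2 v r hvradj (some (q k1))
  have hq2 : q (k1 + 1 + k2) = r := by
    have h1 : q (k1 + 1) = g (q k1) := step1 k1 (by omega)
    have h2 : q ((k1 + 1) + k2) = g^[k2] (q (k1 + 1)) := step2 (k1+1) k2 (by omega)
    rw [h2, h1]
    simp only [hg]
    exact hk2
  -- an action pointing to r, followed by an action, forces a root action in between
  have subkey : ∀ m, m < 2 * d → q m = r →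
      ∃ s, t m ≤ s ∧ s < t (m+1) ∧ Acts e r s := by
    intro m hm hqm
    have hb := acts_step hexec hv hvr (hacts m (le_of_lt hm))
    have hP1 : (e (t m + 1)).P v = some r := by
      rw [hb.2.1]
      exact congrArg some hqm
    have hH1 : (e (t m + 1)).H v = (e (t m)).H r + 1 := by
      rw [hb.2.2]
      exact congrArg (fun u => (e (t m)).H u + 1) hqm
    have hc := const_of_no_acts v (i := t m + 1) (j := t (m+1))
        (hmono m hm)
        (fun s hs hs' => hcons m hm s (by omega) hs')
    have hb' := acts_step hexec hv hvr (hacts (m+1) (by omega))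
    have hguard := hb'.1
    unfold GuardNonRoot at hguard
    push_neg at hguard
    have hHne : (e (t (m+1))).H v ≠ (e (t (m+1))).H r + 1 :=
      hguard r (hc.1.trans hP1) hvradj
    have hHr : (e (t (m+1))).H r ≠ (e (t m)).H r := by
      intro hEq
      exact hHne (by rw [hc.2, hH1, hEq])
    by_contra hno
    push_neg at hno
    exact hHr (const_of_no_acts r (i := t m) (j := t (m+1))
      (le_of_lt (hmono m hm)) hno).2
  obtain ⟨s1, hs1a, hs1b, hs1⟩ := subkey k1 (by omega) hq1
  obtain ⟨s2, hs2a, hs2b, hs2⟩ := subkey (k1 + 1 + k2) (by omega) hq2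
  have heq : s1 = s2 := root_once hexec hr hs1 hs2
  -- monotonicity of t over the relevant range
  have tmono : t (k1 + 1) ≤ t (k1 + 1 + k2) := by
    have : ∀ j, k1 + 1 + j ≤ 2 * d → t (k1 + 1) ≤ t (k1 + 1 + j) := by
      intro j
      induction j with
      | zero => intro _; exact le_rfl
      | succ j ih =>
        intro hj
        exact le_trans (ih (by omega)) (le_of_lt (hmono (k1 + 1 + j) (by omega)))
    exact this k2 (by omega)
  omega

end AuxCAFS

/-- every correct neighbor of the root executes at most `2 * Δ`
actions in any execution, where `Δ` is the maximum degree of the graph. -/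
theorem stmt2 [DecidableEq V] [Fintype V] (G : SimpleGraph V) [DecidableRel G.Adj]
    (r : V) (B : Set V) (next : V → Option V → V) (hnext : CyclicNext G next)
    (e : ℕ → Config V) (hexec : IsExec G r B next e) (hr : r ∉ B)
    (v : V) (hv : v ∉ B) (hadj : G.Adj r v) :
    {i : ℕ | Acts e v i}.Finite ∧
    {i : ℕ | Acts e v i}.ncard ≤ 2 * G.maxDegree := by
  classical
  set d := (G.neighborSet v).ncard with hd
  -- any finset of action times of v has cardinality at most 2 * d
  have key_finset : ∀ T : Finset ℕ, (∀ i ∈ T, Acts e v i) → T.card ≤ 2 * d := by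
    intro T hT
    by_contra hc
    push_neg at hc
    have hTne : T.Nonempty := Finset.card_pos.mp (by omega)
    set M := T.max' hTne with hM
    set T' := (Finset.range (M+1)).filter (fun i => Acts e v i) with hT'
    have hsub : T ⊆ T' := by
      intro i hi
      rw [hT', Finset.mem_filter, Finset.mem_range]
      exact ⟨Nat.lt_succ_of_le (T.le_max' i hi), hT i hi⟩
    have hcard : 2 * d < T'.card := lt_of_lt_of_le hc (Finset.card_le_card hsub)
    set f := T'.orderIsoOfFin rfl with hf
    set t : ℕ → ℕ := fun k => if h : k < T'.card then (f ⟨k, h⟩ : ℕ) else 0 with ht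
    have htval : ∀ k, (h : k < T'.card) → t k = (f ⟨k, h⟩ : ℕ) := by
      intro k h
      rw [ht]
      simp [h]
    have htmem : ∀ k, k < T'.card → t k ∈ T' := by
      intro k h
      rw [htval k h]
      exact (f ⟨k, h⟩).2
    have htlt : ∀ k l (hk : k < T'.card) (hl : l < T'.card), k < l → t k < t l := by
      intro k l hk hl hkl
      rw [htval k hk, htval l hl]
      exact Subtype.coe_lt_coe.mpr (f.lt_iff_lt.mpr hkl)
    refine key_lemma hnext hexec hr hv hadj t ?_ ?_ ?_
    · intro k hk
      exact htlt k (k+1) (by omega) (by omega) (by omega)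
    · intro k hk
      have := htmem k (by omega)
      rw [hT', Finset.mem_filter] at this
      exact this.2
    · intro k hk s hs1 hs2 hA
      have hk1 : k + 1 < T'.card := by omega
      have hsmem : s ∈ T' := by
        rw [hT', Finset.mem_filter, Finset.mem_range]
        refine ⟨?_, hA⟩
        have h1 := htmem (k+1) hk1
        rw [hT', Finset.mem_filter, Finset.mem_range] at h1
        omega
      obtain ⟨l, hl⟩ := f.surjective ⟨s, hsmem⟩
      have hls : (f l : ℕ) = s := by rw [hl]
      have h1 : (⟨k, by omega⟩ : Fin T'.card) < l := by
        rw [← f.lt_iff_lt, ← Subtype.coe_lt_coe, hls, ← htval k (by omega)]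
        exact hs1
      have h2 : l < (⟨k + 1, hk1⟩ : Fin T'.card) := by
        rw [← f.lt_iff_lt, ← Subtype.coe_lt_coe, hls, ← htval (k+1) hk1]
        exact hs2
      rw [Fin.lt_def] at h1 h2
      simp at h1 h2
      omega
  have hfin : {i : ℕ | Acts e v i}.Finite := by
    by_contra hinf
    obtain ⟨T, hTsub, hTcard⟩ :=
      Set.Infinite.exists_subset_card_eq hinf (2 * d + 1)
    have := key_finset T (fun i hi => hTsub hi)
    omega
  refine ⟨hfin, ?_⟩
  have h1 : {i : ℕ | Acts e v i}.ncard = hfin.toFinset.card :=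
    Set.ncard_eq_toFinset_card _ hfin
  have h2 : hfin.toFinset.card ≤ 2 * d :=
    key_finset hfin.toFinset (fun i hi => hfin.mem_toFinset.mp hi)
  have h3 : d ≤ G.maxDegree := by
    have hdeg : d = G.degree v := by
      rw [hd, Set.ncard_eq_toFinset_card']
      rfl
    rw [hdeg]
    exact G.degree_le_maxDegree v
  omega
end

section
/- In any execution of CAFS, a correct process v at distance δ from the root r in the subgraph induced by correct processes executes at most O(Δ^δ) rule actions; concretely, if A(δ) denotes the maximum number of actions of a correct process at correct-distance δ, then A(0) ≤ 1 and A(δ+1) ≤ 2Δ·(A(δ)+1). -/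
open Function

variable {V : Type}

/-- Recursive action bound: `ActBound Δ 0 = 1` and
`ActBound Δ (δ+1) = 2Δ * (ActBound Δ δ + 1)`; it is `O(Δ^δ)`. -/
def ActBound (Δ : ℕ) : ℕ → ℕ
  | 0 => 1
  | δ + 1 => 2 * Δ * (ActBound Δ δ + 1)


section CAFSProof

set_option linter.unusedSectionVars false

variable {V : Type} [DecidableEq V] {G : SimpleGraph V} {r : V} {B : Set V}
  {next : V → Option V → V} {e : ℕ → Config V}

lemma noact_iff {v : V} {j : ℕ} :
    ¬ Acts e v j ↔ ((e (j+1)).P v = (e j).P v ∧ (e (j+1)).H v = (e j).H v) := by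
  unfold Acts; push_neg; tauto

lemma act_rule (hexec : IsExec G r B next e) {v : V} (hv : v ∉ B) (hvr : v ≠ r) {j : ℕ}
    (h : Acts e v j) :
    GuardNonRoot G (e j) v ∧ (e (j+1)).P v = some (next v ((e j).P v)) ∧
      (e (j+1)).H v = (e j).H (next v ((e j).P v)) + 1 := by
  rcases hexec j v hv with hkeep | hrule
  · exact absurd h (noact_iff.mpr hkeep)
  · rwa [if_neg hvr] at hrule

lemma root_state (hexec : IsExec G r B next e) (hr : r ∉ B) {j : ℕ} (h : Acts e r j) :
    ∀ m, j < m → (e m).P r = none ∧ (e m).H r = 0 := by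
  have base : (e (j+1)).P r = none ∧ (e (j+1)).H r = 0 := by
    rcases hexec j r hr with hkeep | hrule
    · exact absurd h (noact_iff.mpr hkeep)
    · rw [if_pos rfl] at hrule; exact ⟨hrule.2.1, hrule.2.2⟩
  intro m hm
  induction m with
  | zero => omega
  | succ m ih =>
    rcases Nat.lt_or_ge j m with hlt | hge
    · have hm' := ih hlt
      rcases hexec m r hr with hkeep | hrule
      · exact ⟨hkeep.1.trans hm'.1, hkeep.2.trans hm'.2⟩
      · rw [if_pos rfl] at hrule; exact ⟨hrule.2.1, hrule.2.2⟩
    · have : m = j := by omega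
      subst this; exact base

lemma root_count (hexec : IsExec G r B next e) (hr : r ∉ B) :
    {i | Acts e r i}.Finite ∧ {i | Acts e r i}.ncard ≤ 1 := by
  by_cases hS : {i | Acts e r i} = ∅
  · rw [hS]; simp
  · obtain ⟨i0, hi0⟩ := Set.nonempty_iff_ne_empty.mpr hS
    have hsub : {i | Acts e r i} ⊆ {i0} := by
      intro j hj
      by_contra hne
      have hne' : j ≠ i0 := by simpa using hne
      rcases hne'.lt_or_gt with hlt | hlt
      · have h1 := root_state hexec hr hj i0 hlt
        have h2 := root_state hexec hr hj (i0+1) (by omega)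
        exact (noact_iff.mpr ⟨h2.1.trans h1.1.symm, h2.2.trans h1.2.symm⟩) hi0
      · have h1 := root_state hexec hr hi0 j hlt
        have h2 := root_state hexec hr hi0 (j+1) (by omega)
        exact (noact_iff.mpr ⟨h2.1.trans h1.1.symm, h2.2.trans h1.2.symm⟩) hj
    exact ⟨(Set.finite_singleton i0).subset hsub,
      le_trans (Set.ncard_le_ncard hsub (Set.finite_singleton i0)) (by simp)⟩

open Classical in
/-- Number of actions of `v` in `[a, j)`. -/
noncomputable def nacts (e : ℕ → Config V) (v : V) (a j : ℕ) : ℕ :=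
  ((Finset.Ico a j).filter fun m => Acts e v m).card

lemma nacts_self {v : V} {a : ℕ} : nacts e v a a = 0 := by simp [nacts]

open Classical in
lemma nacts_succ {v : V} {a j : ℕ} (h : a ≤ j) :
    nacts e v a (j+1) = if Acts e v j then nacts e v a j + 1 else nacts e v a j := by
  unfold nacts
  rw [Nat.Ico_succ_right_eq_insert_Ico h, Finset.filter_insert]
  split
  · rw [Finset.card_insert_of_notMem (by simp)]
  · rfl

open Classical in
lemma nacts_mono {v : V} {a j j' : ℕ} (h : j ≤ j') : nacts e v a j ≤ nacts e v a j' :=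
  Finset.card_le_card (Finset.filter_subset_filter _ (Finset.Ico_subset_Ico le_rfl h))

lemma nacts_lt {v : V} {a i j : ℕ} (ha : a ≤ i) (hij : i < j) (hact : Acts e v i) :
    nacts e v a i < nacts e v a j := by
  have h1 : nacts e v a (i+1) = nacts e v a i + 1 := by rw [nacts_succ ha, if_pos hact]
  have h2 : nacts e v a (i+1) ≤ nacts e v a j := nacts_mono hij
  omega

lemma interval_bound (hexec : IsExec G r B next e) (hnext : CyclicNext G next)
    {v u : V} (hv : v ∉ B) (hvr : v ≠ r) (hadj : G.Adj v u) (a : ℕ) :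
    ∃ k, k + 1 ≤ (G.neighborSet v).ncard ∧
      ∀ i, a ≤ i → (∀ m, a ≤ m → m < i → ¬ Acts e u m) → Acts e v i →
        nacts e v a i ≤ k := by
  obtain ⟨k, hk, hiter⟩ := hnext.2 v u hadj ((e a).P v)
  set F : V → V := fun w => next v (some w) with hF
  set x1 : V := next v ((e a).P v) with hx1
  have Inv : ∀ j, a ≤ j → (∀ m, a ≤ m → m < j → ¬ Acts e u m) →
      (((e j).P v = some u ∧ (e j).H v = (e j).H u + 1)
        ∨ (nacts e v a j = 0 ∧ (e j).P v = (e a).P v)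
        ∨ ∃ m, m < k ∧ nacts e v a j = m + 1 ∧ (e j).P v = some (F^[m] x1)) := by
    intro j hj
    induction j, hj using Nat.le_induction with
    | base => exact fun _ => Or.inr (Or.inl ⟨nacts_self, rfl⟩)
    | succ j hj ih =>
      intro idle'
      have idle : ∀ m, a ≤ m → m < j → ¬ Acts e u m := fun m hm hm' =>
        idle' m hm (by omega)
      have inv := ih idle
      have hidlej : ¬ Acts e u j := idle' j hj (by omega)
      obtain ⟨huP, huH⟩ := noact_iff.mp hidlej
      by_cases hact : Acts e v j
      · obtain ⟨hg, hP, hH⟩ := act_rule hexec hv hvr hact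
        have hn : nacts e v a (j+1) = nacts e v a j + 1 := by
          rw [nacts_succ hj, if_pos hact]
        rcases inv with hC | ⟨h0, hPa⟩ | ⟨m, hm, hnm, hPm⟩
        · exact absurd ⟨u, hC.1, hadj, hC.2⟩ hg
        · rcases Nat.eq_zero_or_pos k with hk0 | hkpos
          · left
            have hux : x1 = u := by
              have := hiter
              rw [hk0] at this
              simpa using this
            constructor
            · rw [hP, hPa, ← hx1, hux]
            · rw [hPa, ← hx1, hux] at hH
              rw [hH, huH]
          · right; right
            refine ⟨0, hkpos, by rw [hn, h0], ?_⟩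
            simp only [Function.iterate_zero, id]
            rw [hP, hPa]
        · have hnew : next v ((e j).P v) = F^[m+1] x1 := by
            rw [hPm, Function.iterate_succ_apply']
          rcases Nat.lt_or_ge (m+1) k with hlt | hge
          · right; right
            exact ⟨m+1, hlt, by rw [hn, hnm], by rw [hP, hnew]⟩
          · have hmk : m + 1 = k := by omega
            left
            have hu' : F^[m+1] x1 = u := by rw [hmk]; exact hiter
            constructor
            · rw [hP, hnew, hu']
            · rw [hnew, hu'] at hH
              rw [hH, huH]
      · obtain ⟨hPeq, hHeq⟩ := noact_iff.mp hact
        have hn : nacts e v a (j+1) = nacts e v a j := by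
          rw [nacts_succ hj, if_neg hact]
        rcases inv with hC | ⟨h0, hPa⟩ | ⟨m, hm, hnm, hPm⟩
        · left; exact ⟨hPeq.trans hC.1, by rw [hHeq, hC.2, huH]⟩
        · right; left; exact ⟨hn.trans h0, hPeq.trans hPa⟩
        · right; right; exact ⟨m, hm, hn.trans hnm, hPeq.trans hPm⟩
  refine ⟨k, hk, ?_⟩
  intro i hai hidle hacti
  have inv := Inv i hai hidle
  obtain ⟨hg, _, _⟩ := act_rule hexec hv hvr hacti
  rcases inv with hC | ⟨h0, _⟩ | ⟨m, hm, hnm, _⟩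
  · exact absurd ⟨u, hC.1, hadj, hC.2⟩ hg
  · omega
  · omega

lemma step_count [Fintype V] [DecidableRel G.Adj]
    (hexec : IsExec G r B next e) (hnext : CyclicNext G next)
    {v u : V} (hv : v ∉ B) (hvr : v ≠ r) (hadj : G.Adj v u) {A : ℕ}
    (hfin : {i | Acts e u i}.Finite) (hA : {i | Acts e u i}.ncard ≤ A) :
    {i | Acts e v i}.Finite ∧
      {i | Acts e v i}.ncard ≤ 2 * G.maxDegree * (A + 1) := by
  classical
  set Δ' : ℕ := (G.neighborSet v).ncard with hΔ'
  have hΔ'le : Δ' ≤ G.maxDegree := by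
    rw [hΔ', Set.ncard_eq_toFinset_card', ← SimpleGraph.neighborFinset_def]
    exact G.degree_le_maxDegree v
  set Fu : Finset ℕ := hfin.toFinset with hFu
  have hFucard : Fu.card ≤ A := by
    rw [hFu, ← Set.ncard_eq_toFinset_card _ hfin]; exact hA
  set A0 : Finset ℕ := insert 0 (Fu.image (· + 1)) with hA0
  have hA0card : A0.card ≤ A + 1 := by
    calc A0.card ≤ (Fu.image (· + 1)).card + 1 := Finset.card_insert_le _ _
    _ ≤ Fu.card + 1 := by
        have := Finset.card_image_le (s := Fu) (f := (· + 1))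
        omega
    _ ≤ A + 1 := by omega
  set af : ℕ → ℕ := fun i =>
    if h : (Fu.filter (· < i)).Nonempty then (Fu.filter (· < i)).max' h + 1 else 0
    with haf
  have haf_le : ∀ i, af i ≤ i := by
    intro i
    by_cases h : (Fu.filter (· < i)).Nonempty
    · have hm := Finset.max'_mem _ h
      rw [Finset.mem_filter] at hm
      simp only [haf, dif_pos h]
      omega
    · simp only [haf, dif_neg h]
      omega
  have haf_mem : ∀ i, af i ∈ A0 := by
    intro i
    by_cases h : (Fu.filter (· < i)).Nonempty
    · have hmem := Finset.max'_mem _ h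
      rw [Finset.mem_filter] at hmem
      simp only [haf, dif_pos h, hA0]
      exact Finset.mem_insert_of_mem (Finset.mem_image.mpr ⟨_, hmem.1, rfl⟩)
    · simp only [haf, dif_neg h, hA0]
      exact Finset.mem_insert_self _ _
  have haf_idle : ∀ i m, af i ≤ m → m < i → ¬ Acts e u m := by
    intro i m ham hmi hactm
    have hmem : m ∈ Fu.filter (· < i) := by
      rw [Finset.mem_filter, hFu, Set.Finite.mem_toFinset]
      exact ⟨hactm, hmi⟩
    have hne : (Fu.filter (· < i)).Nonempty := ⟨m, hmem⟩
    have hle := Finset.le_max' _ m hmem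
    simp only [haf, dif_pos hne] at ham
    omega
  set f : ℕ → ℕ × ℕ := fun i => (af i, nacts e v (af i) i) with hf
  set S : Set ℕ := {i | Acts e v i} with hS
  have hbound : ∀ i ∈ S, nacts e v (af i) i < Δ' := by
    intro i hi
    obtain ⟨k, hk, hkb⟩ := interval_bound hexec hnext hv hvr hadj (af i)
    have := hkb i (haf_le i) (fun m hm hmi => haf_idle i m hm hmi) hi
    omega
  have himg : f '' S ⊆ ↑(A0 ×ˢ Finset.range Δ') := by
    rintro _ ⟨i, hi, rfl⟩
    simp only [Finset.coe_product, Set.mem_prod, Finset.mem_coe, hf]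
    exact ⟨haf_mem i, Finset.mem_range.mpr (hbound i hi)⟩
  have hinj : Set.InjOn f S := by
    intro i hi j hj hij
    by_contra hne
    rcases Ne.lt_or_gt hne with hlt | hlt
    · have h1 : af i = af j := congrArg Prod.fst hij
      have h2 : nacts e v (af i) i = nacts e v (af j) j := congrArg Prod.snd hij
      rw [← h1] at h2
      have := nacts_lt (e := e) (haf_le i) hlt hi
      omega
    · have h1 : af j = af i := (congrArg Prod.fst hij).symm
      have h2 : nacts e v (af j) j = nacts e v (af i) i := (congrArg Prod.snd hij).symm
      rw [← h1] at h2
      have := nacts_lt (e := e) (haf_le j) hlt hj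
      omega
  have hTfin : (↑(A0 ×ˢ Finset.range Δ') : Set (ℕ × ℕ)).Finite := Finset.finite_toSet _
  have hSfin : S.Finite := Set.Finite.of_finite_image (hTfin.subset himg) hinj
  refine ⟨hSfin, ?_⟩
  have hcard : S.ncard = (f '' S).ncard := (Set.ncard_image_of_injOn hinj).symm
  have hle : (f '' S).ncard ≤ (↑(A0 ×ˢ Finset.range Δ') : Set (ℕ × ℕ)).ncard :=
    Set.ncard_le_ncard himg hTfin
  have hTcard : (↑(A0 ×ˢ Finset.range Δ') : Set (ℕ × ℕ)).ncard = A0.card * Δ' := by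
    rw [Set.ncard_coe_finset, Finset.card_product, Finset.card_range]
  have : S.ncard ≤ (A + 1) * G.maxDegree := by
    rw [hcard] at *
    calc (f '' S).ncard ≤ A0.card * Δ' := by rw [← hTcard]; exact hle
    _ ≤ (A + 1) * G.maxDegree := Nat.mul_le_mul hA0card hΔ'le
  calc S.ncard ≤ (A + 1) * G.maxDegree := this
  _ ≤ 2 * G.maxDegree * (A + 1) := by ring_nf; omega

lemma aux_count [Fintype V] [DecidableRel G.Adj]
    (hnext : CyclicNext G next) (hr : r ∉ B)
    (hconn : (G.induce (Bᶜ : Set V)).Connected)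
    (hexec : IsExec G r B next e) :
    ∀ δ (v : V) (hv : v ∉ B),
      (G.induce (Bᶜ : Set V)).dist ⟨v, hv⟩ ⟨r, hr⟩ = δ →
      {i : ℕ | Acts e v i}.Finite ∧
        {i : ℕ | Acts e v i}.ncard ≤ ActBound G.maxDegree δ := by
  intro δ
  induction δ with
  | zero =>
    intro v hv hdist
    have hreach := hconn ⟨v, hv⟩ ⟨r, hr⟩
    have hvr : v = r := by
      have := (hreach.dist_eq_zero_iff).mp hdist
      exact congrArg Subtype.val this
    subst hvr
    simpa [ActBound] using root_count hexec hv
  | succ δ ih =>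
    intro v hv hdist
    have hreach := hconn ⟨v, hv⟩ ⟨r, hr⟩
    obtain ⟨p, hp⟩ := hreach.exists_walk_length_eq_dist
    rw [hdist] at hp
    cases p with
    | nil => simp at hp
    | @cons _ w _ hadj q =>
      simp only [SimpleGraph.Walk.length_cons] at hp
      have hq : q.length = δ := by omega
      have hdw_le : (G.induce (Bᶜ : Set V)).dist w ⟨r, hr⟩ ≤ δ :=
        hq ▸ SimpleGraph.dist_le q
      have hdw_ge : δ ≤ (G.induce (Bᶜ : Set V)).dist w ⟨r, hr⟩ := by
        have htri := hconn.dist_triangle (u := (⟨v, hv⟩ : (Bᶜ : Set V)))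
          (v := w) (w := (⟨r, hr⟩ : (Bᶜ : Set V)))
        have hd1 : (G.induce (Bᶜ : Set V)).dist ⟨v, hv⟩ w ≤ 1 := by
          have := SimpleGraph.dist_le (SimpleGraph.Walk.cons hadj SimpleGraph.Walk.nil)
          simpa using this
        omega
      have hdw : (G.induce (Bᶜ : Set V)).dist w ⟨r, hr⟩ = δ := le_antisymm hdw_le hdw_ge
      have hwB : (w : V) ∉ B := w.2
      have hdw' : (G.induce (Bᶜ : Set V)).dist ⟨(w : V), hwB⟩ ⟨r, hr⟩ = δ := by
        convert hdw using 2
      obtain ⟨hfin, hA⟩ := ih (w : V) hwB hdw'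
      have hvr : v ≠ r := by
        intro h
        subst h
        rw [(hreach.dist_eq_zero_iff).mpr rfl] at hdist
        omega
      have hadjG : G.Adj v (w : V) := hadj
      have := step_count hexec hnext hv hvr hadjG hfin hA
      exact ⟨this.1, le_trans this.2 (by rw [ActBound])⟩

end CAFSProof

/-- a correct process at distance `δ` from the root in the
subgraph induced by correct processes executes at most `ActBound Δ δ`
actions, where `ActBound 0 ≤ 1` and `ActBound (δ+1) ≤ 2Δ(ActBound δ + 1)`. -/
theorem stmt3 [DecidableEq V] [Fintype V] (G : SimpleGraph V) [DecidableRel G.Adj]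
    (r : V) (B : Set V) (next : V → Option V → V) (hnext : CyclicNext G next)
    (hr : r ∉ B) (hconn : (G.induce (Bᶜ : Set V)).Connected)
    (e : ℕ → Config V) (hexec : IsExec G r B next e)
    (v : V) (hv : v ∉ B) :
    (∀ Δ : ℕ, ActBound Δ 0 ≤ 1 ∧ ∀ δ, ActBound Δ (δ + 1) ≤ 2 * Δ * (ActBound Δ δ + 1)) ∧
    {i : ℕ | Acts e v i}.Finite ∧
    {i : ℕ | Acts e v i}.ncard ≤
      ActBound G.maxDegree
        ((G.induce (Bᶜ : Set V)).dist ⟨v, hv⟩ ⟨r, hr⟩) := by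
  refine ⟨fun Δ => ⟨le_refl _, fun δ => le_refl _⟩, ?_⟩
  exact aux_count hnext hr hconn hexec _ v hv rfl
end

section
/- Every execution of CAFS from an arbitrary initial configuration, even with Byzantine processes acting infinitely often, reaches in finitely many correct-process steps a configuration in which every correct process v satisfies spec(v), i.e., a 0-legitimate configuration. -/
open Function

variable {V : Type}

section AuxCAFS

variable [DecidableEq V] {G : SimpleGraph V} {r : V} {B : Set V}
  {next : V → Option V → V} {e : ℕ → Config V}

/-- If a process does not act on an interval, its state is constant there. -/
lemma eq_of_noacts (e : ℕ → Config V) (v : V) {a b : ℕ} (hab : a ≤ b)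
    (h : ∀ m, a ≤ m → m < b → ¬ Acts e v m) :
    (e b).P v = (e a).P v ∧ (e b).H v = (e a).H v := by
  induction b, hab using Nat.le_induction with
  | base => exact ⟨rfl, rfl⟩
  | succ b hab ih =>
    have hb := h b hab (Nat.lt_succ_self b)
    rw [Acts] at hb
    push_neg at hb
    have h2 := ih (fun m hm hm' => h m hm (Nat.lt_succ_of_lt hm'))
    exact ⟨hb.1.trans h2.1, hb.2.trans h2.2⟩

/-- When a correct non-root process acts, it applies its rule. -/
lemma acts_rule (hexec : IsExec G r B next e) {v : V} (hv : v ∉ B) (hvr : v ≠ r)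
    {j : ℕ} (hact : Acts e v j) :
    GuardNonRoot G (e j) v ∧ (e (j+1)).P v = some (next v ((e j).P v)) ∧
      (e (j+1)).H v = (e j).H (next v ((e j).P v)) + 1 := by
  rcases hexec j v hv with h | h
  · rcases hact with h1 | h1
    · exact (h1 h.1).elim
    · exact (h1 h.2).elim
  · rw [if_neg hvr] at h
    exact h

/-- When the (correct) root acts, it resets its variables. -/
lemma acts_root (hexec : IsExec G r B next e) (hr : r ∉ B)
    {j : ℕ} (hact : Acts e r j) :
    (e (j+1)).P r = none ∧ (e (j+1)).H r = 0 := by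
  rcases hexec j r hr with h | h
  · rcases hact with h1 | h1
    · exact (h1 h.1).elim
    · exact (h1 h.2).elim
  · rw [if_pos rfl] at h
    exact ⟨h.2.1, h.2.2⟩

/-- Once the root satisfies its specification, it does so forever. -/
lemma root_persist (hexec : IsExec G r B next e) (hr : r ∉ B) {j : ℕ}
    (h : (e j).P r = none ∧ (e j).H r = 0) :
    ∀ m, j ≤ m → (e m).P r = none ∧ (e m).H r = 0 := by
  intro m hm
  induction m, hm using Nat.le_induction with
  | base => exact h
  | succ m hm ih =>
    rcases hexec m r hr with h' | h'
    · exact ⟨h'.1.trans ih.1, h'.2.trans ih.2⟩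
    · rw [if_pos rfl] at h'
      exact ⟨h'.2.1, h'.2.2⟩

/-- The root eventually stops acting. -/
lemma settle_root (hexec : IsExec G r B next e) (hfair : WeaklyFair G r B e)
    (hr : r ∉ B) : ∃ T, ∀ j, T ≤ j → ¬ Acts e r j := by
  by_cases hg : ∃ j, (e j).P r = none ∧ (e j).H r = 0
  · obtain ⟨j, hj⟩ := hg
    refine ⟨j, fun m hm hact => ?_⟩
    have h1 := root_persist hexec hr hj m hm
    have h2 := root_persist hexec hr hj (m+1) (le_trans hm (Nat.le_succ m))
    rcases hact with h | h
    · exact h (h2.1.trans h1.1.symm)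
    · exact h (h2.2.trans h1.2.symm)
  · push_neg at hg
    have hen : ∀ j, 0 ≤ j → Enabled G r (e j) r := by
      intro j _
      rw [Enabled, if_pos rfl, GuardRoot]
      by_contra hc
      push_neg at hc
      exact hg j hc.1 hc.2
    obtain ⟨j, _, hact⟩ := hfair r hr 0 hen
    have h := acts_root hexec hr hact
    exact (hg (j+1) h.1 h.2).elim

/-- A correct non-root process adjacent to a settled process eventually
stops acting. -/
lemma settle_step (hexec : IsExec G r B next e) (hfair : WeaklyFair G r B e)
    (hnext : CyclicNext G next) {v w : V} (hv : v ∉ B) (hvr : v ≠ r)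
    (hadj : G.Adj v w) {T : ℕ} (hwT : ∀ j, T ≤ j → ¬ Acts e w j) :
    ∃ T', ∀ j, T' ≤ j → ¬ Acts e v j := by
  classical
  by_contra hc
  push_neg at hc
  have hex : ∀ t, ∃ j, t ≤ j ∧ Acts e v j := hc
  have hwconst : ∀ m, T ≤ m → (e m).H w = (e T).H w := fun m hm =>
    (eq_of_noacts e w hm (fun k hk _ => hwT k hk)).2
  let F : ℕ → ℕ := fun t => Nat.find (hex t)
  have hF1 : ∀ t, t ≤ F t ∧ Acts e v (F t) := fun t => Nat.find_spec (hex t)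
  have hFmin : ∀ t m, t ≤ m → m < F t → ¬ Acts e v m := by
    intro t m hm hlt hact
    exact Nat.find_min (hex t) hlt ⟨hm, hact⟩
  let js : ℕ → ℕ := fun m => Nat.rec (F T) (fun _ prev => F (prev + 1)) m
  have hjsS : ∀ m, js (m+1) = F (js m + 1) := fun m => rfl
  have hjsT : ∀ m, T ≤ js m := by
    intro m
    induction m with
    | zero => exact (hF1 T).1
    | succ m ih =>
      exact le_trans (le_trans ih (Nat.le_succ _)) (hF1 (js m + 1)).1
  have hjsAct : ∀ m, Acts e v (js m) := by
    intro m
    cases m with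
    | zero => exact (hF1 T).2
    | succ m => exact (hF1 (js m + 1)).2
  have hP : ∀ m, (e (js (m+1))).P v = (e (js m + 1)).P v := by
    intro m
    exact (eq_of_noacts e v (hF1 (js m + 1)).1
      (fun k hk hk' => hFmin (js m + 1) k hk hk')).1
  set f : V → V := fun u => next v (some u) with hf
  set o : Option V := (e (js 0)).P v with ho
  have key : ∀ m, next v ((e (js m)).P v) = f^[m] (next v o) := by
    intro m
    induction m with
    | zero => rfl
    | succ m ih =>
      have h1 : (e (js (m+1))).P v = some (next v ((e (js m)).P v)) := by
        rw [hP m]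
        exact (acts_rule hexec hv hvr (hjsAct m)).2.1
      rw [h1, ih]
      exact (Function.iterate_succ_apply' f m (next v o)).symm
  obtain ⟨k, _, hkw⟩ := hnext.2 v w hadj o
  have hrule := acts_rule hexec hv hvr (hjsAct k)
  have hkw' : f^[k] (next v o) = w := hkw
  have hw1 : (e (js k + 1)).P v = some w := by
    rw [hrule.2.1, key k, hkw']
  have hw2 : (e (js k + 1)).H v = (e T).H w + 1 := by
    rw [hrule.2.2, key k, hkw', hwconst (js k) (hjsT k)]
  have hpers : ∀ m, js k + 1 ≤ m →
      (e m).P v = some w ∧ (e m).H v = (e T).H w + 1 := by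
    intro m hm
    induction m, hm using Nat.le_induction with
    | base => exact ⟨hw1, hw2⟩
    | succ m hm ih =>
      rcases hexec m v hv with h | h
      · exact ⟨h.1.trans ih.1, h.2.trans ih.2⟩
      · rw [if_neg hvr] at h
        have hTm : T ≤ m := le_trans (hjsT k) (le_trans (Nat.le_succ _) hm)
        exact absurd ⟨w, ih.1, hadj, by rw [ih.2, hwconst m hTm]⟩ h.1
  obtain ⟨j, hj, hact⟩ := hex (js k + 1)
  have h1 := hpers j hj
  have h2 := hpers (j+1) (le_trans hj (Nat.le_succ j))
  rcases hact with h | h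
  · exact h (h2.1.trans h1.1.symm)
  · exact h (h2.2.trans h1.2.symm)

/-- Every correct process eventually stops acting. -/
lemma settle_all (hexec : IsExec G r B next e) (hfair : WeaklyFair G r B e)
    (hnext : CyclicNext G next) (hr : r ∉ B)
    (hconn : (G.induce (Bᶜ : Set V)).Connected) :
    ∀ v, v ∉ B → ∃ T, ∀ j, T ≤ j → ¬ Acts e v j := by
  have key : ∀ (a b : ↥(Bᶜ : Set V)) (p : (G.induce (Bᶜ : Set V)).Walk a b),
      (b : V) = r → ∃ T, ∀ j, T ≤ j → ¬ Acts e (a : V) j := by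
    intro a b p
    induction p with
    | nil =>
      intro hb
      rw [hb]
      exact settle_root hexec hfair hr
    | @cons a c b h p ih =>
      intro hb
      by_cases har : (a : V) = r
      · rw [har]
        exact settle_root hexec hfair hr
      · obtain ⟨T, hT⟩ := ih hb
        have hadj : G.Adj (a : V) (c : V) := h
        exact settle_step hexec hfair hnext a.2 har hadj hT
  intro v hv
  obtain ⟨p⟩ := hconn.preconnected ⟨v, hv⟩ ⟨r, hr⟩
  exact key _ _ p rfl

end AuxCAFS

/-- every execution of CAFS from an arbitrary configuration, even
with Byzantine processes acting infinitely often, reaches in finitely many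
steps a 0-legitimate configuration. -/
theorem stmt4 [DecidableEq V] [Fintype V] (G : SimpleGraph V) [DecidableRel G.Adj]
    (r : V) (B : Set V) (next : V → Option V → V) (hnext : CyclicNext G next)
    (hr : r ∉ B) (hconn : (G.induce (Bᶜ : Set V)).Connected)
    (e : ℕ → Config V) (hexec : IsExec G r B next e)
    (hfair : WeaklyFair G r B e) :
    ∃ i, ZeroLegit G r B (e i) := by
  classical
  have hsettle := settle_all hexec hfair hnext hr hconn
  have hs : ∀ v : V, ∃ T, ∀ j, T ≤ j → v ∉ B → ¬ Acts e v j := by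
    intro v
    by_cases hv : v ∈ B
    · exact ⟨0, fun j _ hv' => absurd hv hv'⟩
    · obtain ⟨T, hT⟩ := hsettle v hv
      exact ⟨T, fun j hj _ => hT j hj⟩
  choose Tf hTf using hs
  set N := Finset.univ.sup Tf with hN
  have hNle : ∀ v, Tf v ≤ N := fun v => Finset.le_sup (Finset.mem_univ v)
  have hnoact : ∀ v, v ∉ B → ∀ j, N ≤ j → ¬ Acts e v j :=
    fun v hv j hj => hTf v j (le_trans (hNle v) hj) hv
  have hconst : ∀ v, v ∉ B → ∀ j, N ≤ j →
      (e j).P v = (e N).P v ∧ (e j).H v = (e N).H v :=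
    fun v hv j hj => eq_of_noacts e v hj (fun m hm _ => hnoact v hv m hm)
  refine ⟨N, fun v hv => ?_⟩
  rw [Spec]
  by_cases hvr : v = r
  · subst hvr
    rw [if_pos rfl]
    have hguard : ∃ j, N ≤ j ∧ (e j).P v = none ∧ (e j).H v = 0 := by
      by_contra hg
      push_neg at hg
      have hen : ∀ j, N ≤ j → Enabled G v (e j) v := by
        intro j hj
        rw [Enabled, if_pos rfl, GuardRoot]
        by_contra hcon
        push_neg at hcon
        exact hg j hj hcon.1 hcon.2
      obtain ⟨j, hj, hact⟩ := hfair v hv N hen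
      exact hnoact v hv j hj hact
    obtain ⟨j, hj, h1, h2⟩ := hguard
    have hc := hconst v hv j hj
    exact ⟨hc.1.symm.trans h1, hc.2.symm.trans h2⟩
  · rw [if_neg hvr]
    have hguard : ∃ j, N ≤ j ∧ ¬ GuardNonRoot G (e j) v := by
      by_contra hg
      push_neg at hg
      have hen : ∀ j, N ≤ j → Enabled G r (e j) v := by
        intro j hj
        rw [Enabled, if_neg hvr]
        exact hg j hj
      obtain ⟨j, hj, hact⟩ := hfair v hv N hen
      exact hnoact v hv j hj hact
    obtain ⟨j, hj, hg⟩ := hguard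
    rw [GuardNonRoot, not_not] at hg
    obtain ⟨u, hu1, hu2, hu3⟩ := hg
    refine ⟨u, (hconst v hv j hj).1.symm.trans hu1, hu2, fun huB => ?_⟩
    have h1 := (hconst v hv j hj).2
    have h2 := (hconst u huB j hj).2
    omega
end

section
/- In CAFS, if at some configuration a correct non-root process v has a correct neighbor u whose output variables (P_u, H_u) never change from that point on, then v changes its parent pointer at most 2Δ_v more times before permanently satisfying spec(v), provided following u's parent chain in spec-satisfying states is consistent. -/
open Function

variable {V : Type}

section Helpers

variable [DecidableEq V]

/-- The two possible behaviours of a correct non-root process at a step. -/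
lemma step_cases (G : SimpleGraph V) (r : V) (B : Set V) (next : V → Option V → V)
    (e : ℕ → Config V) (hexec : IsExec G r B next e) {x : V} (hx : x ∉ B) (hxr : x ≠ r)
    (j : ℕ) :
    ((e (j+1)).P x = (e j).P x ∧ (e (j+1)).H x = (e j).H x) ∨
    (GuardNonRoot G (e j) x ∧ (e (j+1)).P x = some (next x ((e j).P x)) ∧
      (e (j+1)).H x = (e j).H (next x ((e j).P x)) + 1) := by
  have h := hexec j x hx
  rwa [if_neg hxr] at h

/-- Once a correct non-root process points to a neighbour with frozen height and has
the correct height, its state never changes again. -/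
lemma absorb (G : SimpleGraph V) (r : V) (B : Set V) (next : V → Option V → V)
    (e : ℕ → Config V) (hexec : IsExec G r B next e) {x y : V} (hx : x ∉ B) (hxr : x ≠ r)
    (hadj : G.Adj x y) (T : ℕ) (hfr : ∀ j, T ≤ j → (e j).H y = (e T).H y)
    (s : ℕ) (hTs : T ≤ s) (hP : (e s).P x = some y) (hH : (e s).H x = (e T).H y + 1) :
    ∀ j, s ≤ j → (e j).P x = some y ∧ (e j).H x = (e T).H y + 1 := by
  intro j hj
  induction j, hj using Nat.le_induction with
  | base => exact ⟨hP, hH⟩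
  | succ j hj ih =>
    rcases step_cases G r B next e hexec hx hxr j with ⟨h1, h2⟩ | ⟨hg, _, _⟩
    · rw [h1, h2]; exact ih
    · exact absurd ⟨y, ih.1, hadj, by rw [ih.2, hfr j (hTs.trans hj)]⟩ hg

/-- Master lemma: a correct non-root process `x` with a correct neighbour `y` whose
height is frozen from time `T` on changes its parent pointer at most `Δ_x` more
times, and its whole state is eventually constant. -/
lemma master (G : SimpleGraph V) [DecidableRel G.Adj] (r : V) (B : Set V)
    (next : V → Option V → V) (hnext : CyclicNext G next)
    (e : ℕ → Config V) (hexec : IsExec G r B next e) (x y : V)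
    (hx : x ∉ B) (hxr : x ≠ r) (hadj : G.Adj x y) (T : ℕ)
    (hfr : ∀ j, T ≤ j → (e j).H y = (e T).H y) :
    ({j : ℕ | T ≤ j ∧ (e (j+1)).P x ≠ (e j).P x}.Finite ∧
     {j : ℕ | T ≤ j ∧ (e (j+1)).P x ≠ (e j).P x}.ncard ≤ (G.neighborSet x).ncard) ∧
    ∃ S, T ≤ S ∧ ∀ j, S ≤ j → (e j).P x = (e S).P x ∧ (e j).H x = (e S).H x := by
  classical
  set f : V → V := fun z => next x (some z) with hf
  set o : Option V := (e T).P x with ho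
  obtain ⟨k, hk, hky⟩ := hnext.2 x y hadj o
  set Chg : ℕ → Prop := fun i => (e (i+1)).P x ≠ (e i).P x with hChg
  set C : ℕ → ℕ := fun j => ((Finset.Ico T j).filter Chg).card with hC
  have hCmono : ∀ {i j : ℕ}, i ≤ j → C i ≤ C j := fun h =>
    Finset.card_le_card (Finset.filter_subset_filter _ (Finset.Ico_subset_Ico le_rfl h))
  have hC0 : ∀ j, j ≤ T → C j = 0 := by
    intro j hj
    have : Finset.Ico T j = ∅ := Finset.Ico_eq_empty (by omega)
    simp [hC, this]
  have hCsucc : ∀ j, T ≤ j → C (j+1) = if Chg j then C j + 1 else C j := by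
    intro j hj
    simp only [hC, Nat.Ico_succ_right_eq_insert_Ico hj, Finset.filter_insert]
    split
    · rw [Finset.card_insert_of_notMem (by simp)]
    · rfl
  -- characterization of the pointer of x after `C j` changes
  have hCH : ∀ j, T ≤ j → (C j = 0 ∧ (e j).P x = o) ∨
      ∃ m, C j = m + 1 ∧ (e j).P x = some (f^[m] (next x o)) := by
    intro j hj
    induction j, hj using Nat.le_induction with
    | base => exact Or.inl ⟨hC0 T le_rfl, ho⟩
    | succ j hj ih =>
      by_cases hc : Chg j
      · rcases step_cases G r B next e hexec hx hxr j with ⟨h1, _⟩ | ⟨_, h2, _⟩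
        · exact absurd h1 hc
        · rw [hCsucc j hj, if_pos hc]
          rcases ih with ⟨hc0, hP⟩ | ⟨m, hcm, hP⟩
          · exact Or.inr ⟨0, by omega, by rw [h2, hP, Function.iterate_zero_apply]⟩
          · refine Or.inr ⟨m+1, by omega, ?_⟩
            rw [h2, hP, Function.iterate_succ_apply']
      · have heq : (e (j+1)).P x = (e j).P x := not_not.mp hc
        rw [hCsucc j hj, if_neg hc, heq]
        exact ih
  -- the key firing step: when the (k+1)-st change happens, x points at y
  by_cases hex : ∃ j, k + 1 ≤ C j
  · have hTM : T < Nat.find hex := by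
      by_contra h
      have h1 := Nat.find_spec hex
      have := hC0 (Nat.find hex) (by omega)
      omega
    obtain ⟨M', hM'⟩ : ∃ M', Nat.find hex = M' + 1 := ⟨Nat.find hex - 1, by omega⟩
    have hMspec : k + 1 ≤ C (M' + 1) := hM' ▸ Nat.find_spec hex
    have hTM' : T ≤ M' := by omega
    have hlt : ¬ k + 1 ≤ C M' := Nat.find_min hex (by omega)
    have hchg : Chg M' := by
      intro h
      rw [hCsucc M' hTM', if_neg (not_not_intro h)] at hMspec
      omega
    have hCM : C (M' + 1) = k + 1 ∧ C M' = k := by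
      rw [hCsucc M' hTM', if_pos hchg] at hMspec ⊢
      omega
    have hnexty : next x ((e M').P x) = y := by
      rcases hCH M' hTM' with ⟨hc0, hP⟩ | ⟨m, hcm, hP⟩
      · have hk0 : k = 0 := by omega
        rw [hP, ← hky, hk0, Function.iterate_zero_apply]
      · have hmk : m + 1 = k := by omega
        rw [hP]
        have h5 : next x (some (f^[m] (next x o))) = f^[m+1] (next x o) :=
          (Function.iterate_succ_apply' f m (next x o)).symm
        rw [h5, hmk]
        exact hky
    rcases step_cases G r B next e hexec hx hxr M' with ⟨h1, _⟩ | ⟨_, h2, h3⟩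
    · exact absurd h1 hchg
    · rw [hnexty] at h2 h3
      rw [hfr M' hTM'] at h3
      have habs := absorb G r B next e hexec hx hxr hadj T hfr (M' + 1) (by omega) h2 h3
      have hnomore : ∀ j, M' + 1 ≤ j → ¬ Chg j := by
        intro j hj hc
        exact hc (((habs (j+1) (by omega)).1).trans (habs j hj).1.symm)
      constructor
      · have hsub : {j : ℕ | T ≤ j ∧ (e (j+1)).P x ≠ (e j).P x} ⊆
            ↑((Finset.Ico T (M' + 1)).filter Chg) := by
          intro j ⟨hj1, hj2⟩
          simp only [Finset.coe_filter, Finset.mem_Ico, Set.mem_setOf_eq]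
          refine ⟨⟨hj1, ?_⟩, hj2⟩
          by_contra h
          exact hnomore j (by omega) hj2
        have hfin : {j : ℕ | T ≤ j ∧ (e (j+1)).P x ≠ (e j).P x}.Finite :=
          Set.Finite.subset (Finset.finite_toSet _) hsub
        refine ⟨hfin, ?_⟩
        calc {j : ℕ | T ≤ j ∧ (e (j+1)).P x ≠ (e j).P x}.ncard
            ≤ ((Finset.Ico T (M' + 1)).filter Chg : Finset ℕ).card := by
              rw [← Set.ncard_coe_finset]
              exact Set.ncard_le_ncard hsub (Finset.finite_toSet _)
          _ = k + 1 := hCM.1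
          _ ≤ (G.neighborSet x).ncard := hk
      · refine ⟨M' + 1, by omega, fun j hj => ?_⟩
        rw [(habs j hj).1, (habs j hj).2, (habs (M'+1) le_rfl).1, (habs (M'+1) le_rfl).2]
        exact ⟨rfl, rfl⟩
  · push_neg at hex
    have hbnd : ∀ j, C j ≤ k := fun j => by have := hex j; omega
    have hFbnd : ∀ F : Finset ℕ, ↑F ⊆ {j : ℕ | T ≤ j ∧ (e (j+1)).P x ≠ (e j).P x} →
        F.card ≤ k := by
      intro F hF
      have hsub : F ⊆ (Finset.Ico T (F.sup id + 1)).filter Chg := by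
        intro i hi
        have hi' := hF hi
        simp only [Set.mem_setOf_eq] at hi'
        simp only [Finset.mem_filter, Finset.mem_Ico]
        exact ⟨⟨hi'.1, Nat.lt_succ_of_le (Finset.le_sup (f := id) hi)⟩, hi'.2⟩
      exact (Finset.card_le_card hsub).trans (hbnd _)
    have hfin : {j : ℕ | T ≤ j ∧ (e (j+1)).P x ≠ (e j).P x}.Finite := by
      by_contra hinf
      obtain ⟨t, hts, htf, htc⟩ :=
        Set.Infinite.exists_subset_ncard_eq hinf (k+1)
      have := hFbnd htf.toFinset (by rw [Set.Finite.coe_toFinset]; exact hts)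
      rw [← Set.ncard_eq_toFinset_card t htf, htc] at this
      omega
    refine ⟨⟨hfin, ?_⟩, ?_⟩
    · rw [Set.ncard_eq_toFinset_card _ hfin]
      exact (hFbnd hfin.toFinset (by rw [Set.Finite.coe_toFinset])).trans (by omega)
    · -- the state of x is eventually constant
      set N : ℕ := max (hfin.toFinset.sup id + 1) T with hN
      have hTN : T ≤ N := le_max_right _ _
      have hnochg : ∀ j, N ≤ j → ¬ Chg j := by
        intro j hj hc
        have hjmem : j ∈ hfin.toFinset := by
          rw [Set.Finite.mem_toFinset]
          exact ⟨hTN.trans hj, hc⟩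
        have := Finset.le_sup (f := id) hjmem
        simp only [id] at this
        omega
      have hPc : ∀ j, N ≤ j → (e j).P x = (e N).P x := by
        intro j hj
        induction j, hj using Nat.le_induction with
        | base => rfl
        | succ j hj ih => rw [not_not.mp (hnochg j hj), ih]
      by_cases hHc : ∃ s, N ≤ s ∧ (e (s+1)).H x ≠ (e s).H x
      · obtain ⟨s, hs, hsH⟩ := hHc
        rcases step_cases G r B next e hexec hx hxr s with ⟨_, h2⟩ | ⟨_, h2, h3⟩
        · exact absurd h2 hsH
        · have hPeq : (e s).P x = some (next x ((e s).P x)) := by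
            rw [← h2, (hPc (s+1) (by omega)), (hPc s hs)]
          set z := next x ((e s).P x) with hz
          have hfz : f z = z := by
            rw [hf]
            show next x (some z) = z
            conv_lhs => rw [hz, ← hPeq]
          have hzy : z = y := by
            obtain ⟨k', _, hk'⟩ := hnext.2 x y hadj (some z)
            have : next x (some z) = z := hfz
            rw [this] at hk'
            rw [← hk', Function.iterate_fixed hfz]
          rw [hzy] at hPeq h3
          rw [hfr s (hTN.trans hs)] at h3
          have hP' : (e (s+1)).P x = some y := by
            rw [hPc (s+1) (by omega), ← hPc s hs, hPeq]
          have habs := absorb G r B next e hexec hx hxr hadj T hfr (s+1)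
            (by omega) hP' h3
          refine ⟨s+1, by omega, fun j hj => ?_⟩
          rw [(habs j hj).1, (habs j hj).2, (habs (s+1) le_rfl).1, (habs (s+1) le_rfl).2]
          exact ⟨rfl, rfl⟩
      · push_neg at hHc
        have hHcc : ∀ j, N ≤ j → (e j).H x = (e N).H x := by
          intro j hj
          induction j, hj using Nat.le_induction with
          | base => rfl
          | succ j hj ih => rw [hHc j hj, ih]
        exact ⟨N, hTN, fun j hj => ⟨hPc j hj, hHcc j hj⟩⟩

/-- A correct root's height is eventually constant. -/
lemma root_eventually_constant (G : SimpleGraph V) (r : V) (B : Set V)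
    (next : V → Option V → V) (e : ℕ → Config V) (hexec : IsExec G r B next e)
    (hr : r ∉ B) (S : ℕ) :
    ∃ S₂, S ≤ S₂ ∧ ∀ j, S₂ ≤ j → (e j).H r = (e S₂).H r := by
  have hstep : ∀ j, ((e (j+1)).P r = (e j).P r ∧ (e (j+1)).H r = (e j).H r) ∨
      (GuardRoot (e j) r ∧ (e (j+1)).P r = none ∧ (e (j+1)).H r = 0) := by
    intro j
    have h := hexec j r hr
    rwa [if_pos rfl] at h
  by_cases hre : ∃ s, S ≤ s ∧ (e s).P r = none ∧ (e s).H r = 0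
  · obtain ⟨s, hs, hsP, hsH⟩ := hre
    have hconst : ∀ j, s ≤ j → (e j).P r = none ∧ (e j).H r = 0 := by
      intro j hj
      induction j, hj using Nat.le_induction with
      | base => exact ⟨hsP, hsH⟩
      | succ j hj ih =>
        rcases hstep j with ⟨h1, h2⟩ | ⟨_, h1, h2⟩
        · rw [h1, h2]; exact ih
        · exact ⟨h1, h2⟩
    exact ⟨s, hs, fun j hj => by rw [(hconst j hj).2, (hconst s le_rfl).2]⟩
  · push_neg at hre
    have hconst : ∀ j, S ≤ j → (e j).H r = (e S).H r ∧ (e j).P r = (e S).P r := by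
      intro j hj
      induction j, hj using Nat.le_induction with
      | base => exact ⟨rfl, rfl⟩
      | succ j hj ih =>
        rcases hstep j with ⟨h1, h2⟩ | ⟨_, h1, h2⟩
        · rw [h1, h2]; exact ih
        · exact absurd h1 ((hre (j+1) (by omega)) · h2)
    exact ⟨S, le_rfl, fun j hj => (hconst j hj).1⟩

end Helpers

/-- if from some point on a correct neighbor `u` of the correct
non-root process `v` never changes its output variables (and keeps satisfying
its spec), then `v` changes its parent pointer at most `2 * Δ_v` more times
before permanently satisfying `Spec v`. -/
theorem stmt13 [DecidableEq V] [Fintype V] (G : SimpleGraph V) [DecidableRel G.Adj]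
    (r : V) (B : Set V) (next : V → Option V → V) (hnext : CyclicNext G next)
    (e : ℕ → Config V) (hexec : IsExec G r B next e) (hfair : WeaklyFair G r B e)
    (v u : V) (hv : v ∉ B) (hvr : v ≠ r) (hu : u ∉ B) (hadj : G.Adj v u)
    (i₀ : ℕ)
    (hfrozen : ∀ j, i₀ ≤ j →
      (e j).P u = (e i₀).P u ∧ (e j).H u = (e i₀).H u)
    (huspec : ∀ j, i₀ ≤ j → Spec G r B (e j) u) :
    ({j : ℕ | i₀ ≤ j ∧ (e (j + 1)).P v ≠ (e j).P v}.Finite ∧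
     {j : ℕ | i₀ ≤ j ∧ (e (j + 1)).P v ≠ (e j).P v}.ncard ≤ 2 * G.degree v) ∧
    ∃ i, i₀ ≤ i ∧ ∀ j, i ≤ j → Spec G r B (e j) v := by
  classical
  have hufr : ∀ j, i₀ ≤ j → (e j).H u = (e i₀).H u := fun j hj => (hfrozen j hj).2
  obtain ⟨⟨hfin, hcard⟩, S, hS, hstab⟩ :=
    master G r B next hnext e hexec v u hv hvr hadj i₀ hufr
  have hdeg : (G.neighborSet v).ncard = G.degree v := by
    rw [Set.ncard_eq_toFinset_card']
    simp [SimpleGraph.neighborFinset_def, SimpleGraph.degree]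
  refine ⟨⟨hfin, by omega⟩, ?_⟩
  -- fairness: since v's state is constant from S, v cannot be forever enabled
  have hact : ∀ S', S ≤ S' → ∃ j, S' ≤ j ∧ ¬ Enabled G r (e j) v := by
    intro S' hS'
    by_contra h
    push_neg at h
    obtain ⟨j, hj, hacts⟩ := hfair v hv S' (fun j hj => h j hj)
    rcases hacts with hne | hne
    · exact hne (((hstab (j+1) (by omega)).1).trans (hstab j (hS'.trans hj)).1.symm)
    · exact hne (((hstab (j+1) (by omega)).2).trans (hstab j (hS'.trans hj)).2.symm)
  obtain ⟨j₁, hj₁, hen₁⟩ := hact S le_rfl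
  rw [Enabled, if_neg hvr] at hen₁
  obtain ⟨w, hPw, hadjvw, hHw⟩ := not_not.mp hen₁
  have hPS : (e S).P v = some w := by rw [← (hstab j₁ hj₁).1, hPw]
  by_cases hwB : w ∈ B
  · -- Byzantine parent: spec holds forever from S
    refine ⟨S, hS, fun j hj => ?_⟩
    rw [Spec, if_neg hvr]
    exact ⟨w, by rw [(hstab j hj).1, hPS], hadjvw, fun hw => absurd hwB hw⟩
  · -- correct parent: its height is eventually constant
    have hvfrH : ∀ j, S ≤ j → (e j).H v = (e S).H v := fun j hj => (hstab j hj).2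
    have hwconst : ∃ S₂, S ≤ S₂ ∧ ∀ j, S₂ ≤ j → (e j).H w = (e S₂).H w := by
      by_cases hwr : w = r
      · rw [hwr] at hwB ⊢
        exact root_eventually_constant G r B next e hexec hwB S
      · obtain ⟨_, S₂, hS₂, hwstab⟩ :=
          master G r B next hnext e hexec w v hwB hwr hadjvw.symm S hvfrH
        exact ⟨S₂, hS₂, fun j hj => (hwstab j hj).2⟩
    obtain ⟨S₂, hSS₂, hwH⟩ := hwconst
    obtain ⟨j₂, hj₂, hen₂⟩ := hact S₂ hSS₂
    rw [Enabled, if_neg hvr] at hen₂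
    obtain ⟨w', hPw', hadjvw', hHw'⟩ := not_not.mp hen₂
    have hww' : w' = w := by
      have : some w' = some w := by rw [← hPw', (hstab j₂ (hSS₂.trans hj₂)).1, hPS]
      exact Option.some_injective _ this
    rw [hww'] at hHw'
    -- the fixed state of v satisfies the spec forever from S₂
    have hkey : (e S).H v = (e S₂).H w + 1 := by
      rw [← hvfrH j₂ (hSS₂.trans hj₂), ← hwH j₂ hj₂]
      exact hHw'
    refine ⟨S₂, hS.trans hSS₂, fun j hj => ?_⟩
    rw [Spec, if_neg hvr]
    refine ⟨w, by rw [(hstab j (hSS₂.trans hj)).1, hPS], hadjvw, fun _ => ?_⟩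
    rw [hvfrH j (hSS₂.trans hj), hwH j hj, hkey]
end

section
/- In any configuration of CAFS with Byzantine processes where every correct process satisfies spec, the parent pointers of correct processes induce a spanning forest of the correct subgraph in which each tree is rooted either at r or at a correct process whose parent is Byzantine. -/
open Function

variable {V : Type}

/-- Following the parent pointer as long as it points to a correct process. -/
noncomputable def cpstep (B : Set V) (ρ : Config V) (v : V) : V :=
  letI := Classical.propDecidable
  if h : ∃ u, ρ.P v = some u ∧ u ∉ B then h.choose else v

/-- with Byzantine processes, in a configuration where every
correct process satisfies `Spec`, the parent pointers of correct processes
induce a spanning forest of the correct subgraph: heights strictly decrease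
along correct-parent edges (hence acyclicity), and every correct process's
maximal correct-parent chain ends at `r` or at a correct process whose parent
pointer designates a Byzantine process. -/
theorem stmt15 [DecidableEq V] (G : SimpleGraph V) (r : V) (B : Set V)
    (hr : r ∉ B) (hconn : (G.induce (Bᶜ : Set V)).Connected)
    (ρ : Config V) (hspec : ∀ v, v ∉ B → Spec G r B ρ v) :
    (∀ v, v ∉ B → v ≠ r → ∀ u, ρ.P v = some u → u ∉ B → ρ.H u < ρ.H v) ∧
    (∀ v, v ∉ B → ∃ k w, (cpstep B ρ)^[k] v = w ∧ w ∉ B ∧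
      (w = r ∨ ∃ b ∈ B, ρ.P w = some b)) := by
  classical
  have hdec : ∀ v, v ∉ B → v ≠ r → ∀ u, ρ.P v = some u → u ∉ B → ρ.H u < ρ.H v := by
    intro v hv hvr u hPu huB
    have h := hspec v hv
    rw [Spec, if_neg hvr] at h
    obtain ⟨u', hP', _, hH⟩ := h
    rw [hPu] at hP'
    obtain rfl : u = u' := by injection hP'
    have := hH huB
    omega
  refine ⟨hdec, ?_⟩
  have hcp : ∀ v u, ρ.P v = some u → u ∉ B → cpstep B ρ v = u := by
    intro v u hPu huB
    have hex : ∃ u, ρ.P v = some u ∧ u ∉ B := ⟨u, hPu, huB⟩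
    rw [cpstep, dif_pos hex]
    have h1 := hex.choose_spec.1
    exact Option.some.inj (h1.symm.trans hPu)
  suffices hmain : ∀ n v, v ∉ B → ρ.H v = n → ∃ k w, (cpstep B ρ)^[k] v = w ∧ w ∉ B ∧
      (w = r ∨ ∃ b ∈ B, ρ.P w = some b) by
    intro v hv; exact hmain (ρ.H v) v hv rfl
  intro n
  induction n using Nat.strong_induction_on with
  | _ n ih =>
  intro v hv hn
  subst hn
  by_cases hvr : v = r
  · exact ⟨0, v, rfl, hv, Or.inl hvr⟩
  · have h := hspec v hv
    rw [Spec, if_neg hvr] at h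
    obtain ⟨u, hPu, _, hH⟩ := h
    by_cases huB : u ∈ B
    · exact ⟨0, v, rfl, hv, Or.inr ⟨u, huB, hPu⟩⟩
    · have hlt : ρ.H u < ρ.H v := hdec v hv hvr u hPu huB
      obtain ⟨k, w, hkw, hwB, hend⟩ := ih (ρ.H u) hlt u huB rfl
      refine ⟨k + 1, w, ?_, hwB, hend⟩
      rw [Function.iterate_succ_apply, hcp v u hPu huB, hkw]
end
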